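/- The Toda soliton profile yields an exact traveling-wave solution: For every c > 1, with κ = κ(c) the unique positive solution of sinh κ = cκ, the functions r̃_c and p̃_c satisfy for all x ∈ ℝ: −c r̃_c'(x) = p̃_c(x+1) − p̃_c(x) and −c p̃_c'(x) = V'(r̃_c(x)) − V'(r̃_c(x−1)), where V'(r) = 1 − e^{−r}. Consequently, for every x₀ ∈ ℝ the function u(t)(n) = (r̃_c(n − ct − x₀), p̃_c(n − ct − x₀)) solves the Toda lattice equations ∂_t r(t,n) = p(t,n+1) − p(t,n), ∂_t p(t,n) = V'(r(t,n)) − V'(r(t,n−1)). -/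

import Mathlib

open Real Filter Set MeasureTheory

namespace TodaPaper

noncomputable section

/-- The squared Euclidean norm on `ℝ × ℝ`. -/
def nsq (w : ℝ × ℝ) : ℝ := w.1 ^ 2 + w.2 ^ 2

/-- Membership in `ℓ²(ℤ; ℝ²)`. -/
def Meml2 (u : ℤ → ℝ × ℝ) : Prop := Summable fun n : ℤ => nsq (u n)

/-- The `ℓ²(ℤ; ℝ²)` norm. -/
def l2norm (u : ℤ → ℝ × ℝ) : ℝ := Real.sqrt (∑' n : ℤ, nsq (u n))

/-- Membership in the exponentially weighted space `ℓ²_a`. -/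
def Meml2w (a : ℝ) (u : ℤ → ℝ × ℝ) : Prop :=
  Summable fun n : ℤ => Real.exp (2 * a * n) * nsq (u n)

/-- The `ℓ²_a` norm. -/
def wnorm (a : ℝ) (u : ℤ → ℝ × ℝ) : ℝ :=
  Real.sqrt (∑' n : ℤ, Real.exp (2 * a * n) * nsq (u n))

/-- The Toda potential `V(r) = e^{-r} - 1 + r`. -/
def V (r : ℝ) : ℝ := Real.exp (-r) - 1 + r

/-- Derivative of the Toda potential, `V'(r) = 1 - e^{-r}`. -/
def V' (r : ℝ) : ℝ := 1 - Real.exp (-r)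

/-- `u = (r, p)` is a solution of the Toda lattice. -/
structure IsTodaSolution (u : ℝ → ℤ → ℝ × ℝ) : Prop where
  mem : ∀ t, Meml2 (u t)
  dr : ∀ t n, HasDerivAt (fun s => (u s n).1) ((u t (n + 1)).2 - (u t n).2) t
  dp : ∀ t n, HasDerivAt (fun s => (u s n).2) (V' (u t n).1 - V' (u t (n - 1)).1) t

/-- The decay rate `κ(c)`, the (unique, for `c > 1`) positive root of `sinh κ = c κ`. -/
def kappa (c : ℝ) : ℝ := Classical.epsilon fun k : ℝ => 0 < k ∧ Real.sinh k = c * k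

/-- The soliton displacement profile `q̃_c`. -/
def qt (c x : ℝ) : ℝ := Real.log (Real.cosh (kappa c * (x - 1)) / Real.cosh (kappa c * x))

/-- The soliton momentum profile `p̃_c = -c q̃_c'`. -/
def ptil (c : ℝ) : ℝ → ℝ := fun x => -c * deriv (qt c) x

/-- The soliton relative-displacement profile `r̃_c(x) = q̃_c(x+1) - q̃_c(x)`. -/
def rtil (c : ℝ) : ℝ → ℝ := fun x => qt c (x + 1) - qt c x

/-- The soliton profile `ũ_c = (r̃_c, p̃_c)`. -/
def solProfile (c : ℝ) (x : ℝ) : ℝ × ℝ := (rtil c x, ptil c x)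

/-- The soliton `u_c(γ)(n) = ũ_c(n - cγ)`. -/
def uc (c γ : ℝ) : ℤ → ℝ × ℝ := fun n => solProfile c ((n : ℝ) - c * γ)

/-- The neutral mode `u̇_c(γ)(n) = -c ũ_c'(n - cγ)`. -/
def ucDot (c γ : ℝ) : ℤ → ℝ × ℝ := fun n => (-c) • deriv (solProfile c) ((n : ℝ) - c * γ)

/-- The neutral mode `∂_c u_c(γ)(n)`. -/
def ucDc (c γ : ℝ) : ℤ → ℝ × ℝ := fun n => deriv (fun c' => solProfile c' ((n : ℝ) - c' * γ)) c

/-- The `ℓ²` pairing `⟨u, v⟩ = Σ_n (u₁ v₁ + u₂ v₂)`. -/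
def pairing (u v : ℤ → ℝ × ℝ) : ℝ := ∑' n : ℤ, ((u n).1 * (v n).1 + (u n).2 * (v n).2)

/-- The operator `J⁻¹ : (r,p) ↦ (Σ_{k=0}^∞ p(·-k), Σ_{k=1}^∞ r(·-k))`. -/
def Jinv (u : ℤ → ℝ × ℝ) : ℤ → ℝ × ℝ := fun n =>
  (∑' k : ℕ, (u (n - (k : ℤ))).2, ∑' k : ℕ, (u (n - 1 - (k : ℤ))).1)

/-!
Write κ = κ(c). Since q̃_c' = κ (tanh κ(x-1) - tanh κx), we get p̃_c = -cκ (tanh κ(x-1) - tanh κx)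
and p̃_c' = -cκ² (sech² κ(x-1) - sech² κx). The first profile equation holds for every c, as
r̃_c' = q̃_c'(· + 1) - q̃_c'. For the second, cosh(a - κ) cosh(a + κ) = cosh² a + sinh² κ gives
e^{-r̃_c(x)} = 1 + sinh² κ sech² κx, so V'(r̃_c(x)) = -sinh² κ sech² κx, and the dispersion
relation sinh κ = cκ turns c²κ² into sinh² κ. Both components are O(sech κx), so every integer
sampling of the profile lies in ℓ², and the lattice equations follow from the chain rule along
x = n - ct - x₀.
-/

theorem exists_pos_sinh_eq_mul_self {c : ℝ} (hc : 1 < c) : ∃ k : ℝ, 0 < k ∧ sinh k = c * k := by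
  have hc0 : 0 < c := one_pos.trans hc
  have hlog : 0 < log c := log_pos hc
  have hlow : sinh (log c) - c * log c < 0 := by
    have hlog_ge : 1 - c⁻¹ ≤ log c := by
      have := log_le_sub_one_of_pos (inv_pos.2 hc0)
      rw [log_inv] at this
      linarith
    have hinv : c⁻¹ < 1 := inv_lt_one_of_one_lt₀ hc
    rw [sinh_log hc0]
    nlinarith [mul_inv_cancel₀ hc0.ne']
  have hhigh : 0 < sinh (4 * c) - c * (4 * c) := by
    have hexp := quadratic_le_exp_of_nonneg (by positivity : 0 ≤ 4 * c)
    have hexp_neg : exp (-(4 * c)) ≤ 1 := exp_le_one_iff.2 (by linarith)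
    rw [sinh_eq]
    nlinarith
  have hle : log c ≤ 4 * c := by linarith [log_le_sub_one_of_pos hc0]
  obtain ⟨k, hk, hk0⟩ := intermediate_value_Icc hle
    ((continuous_sinh.sub (continuous_const.mul continuous_id)).continuousOn)
    ⟨hlow.le, hhigh.le⟩
  exact ⟨k, hlog.trans_le hk.1, sub_eq_zero.1 hk0⟩

theorem kappa_spec {c : ℝ} (hc : 1 < c) : 0 < kappa c ∧ sinh (kappa c) = c * kappa c :=
  Classical.epsilon_spec (exists_pos_sinh_eq_mul_self hc)

theorem hasDerivAt_tanh (x : ℝ) : HasDerivAt tanh (1 / cosh x ^ 2) x := by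
  have h := (hasDerivAt_sinh x).div (hasDerivAt_cosh x) (cosh_pos x).ne'
  rw [show (cosh x * cosh x - sinh x * sinh x) = 1 by nlinarith [cosh_sq x]] at h
  rwa [show (tanh : ℝ → ℝ) = sinh / cosh from funext tanh_eq_sinh_div_cosh]

theorem hasDerivAt_log_cosh_mul_sub (k b x : ℝ) :
    HasDerivAt (fun y => log (cosh (k * (y - b)))) (k * tanh (k * (x - b))) x := by
  have h := ((hasDerivAt_id x).sub_const b).const_mul k
  refine (((hasDerivAt_cosh _).comp x h).log (cosh_pos _).ne').congr_deriv ?_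
  rw [tanh_eq_sinh_div_cosh]
  simp only [Function.comp_apply, id]
  ring

theorem hasDerivAt_tanh_mul_sub (k b x : ℝ) :
    HasDerivAt (fun y => tanh (k * (y - b))) (k / cosh (k * (x - b)) ^ 2) x := by
  have h := ((hasDerivAt_id x).sub_const b).const_mul k
  refine ((hasDerivAt_tanh _).comp x h).congr_deriv ?_
  simp only [id]
  ring

theorem tanh_sub_tanh (a b : ℝ) : tanh a - tanh b = sinh (a - b) / (cosh a * cosh b) := by
  rw [tanh_eq_sinh_div_cosh, tanh_eq_sinh_div_cosh, sinh_sub]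
  field_simp [(cosh_pos a).ne', (cosh_pos b).ne']

theorem hasDerivAt_qt (c x : ℝ) :
    HasDerivAt (qt c) (kappa c * (tanh (kappa c * (x - 1)) - tanh (kappa c * x))) x := by
  have h := (hasDerivAt_log_cosh_mul_sub (kappa c) 1 x).sub
    (hasDerivAt_log_cosh_mul_sub (kappa c) 0 x)
  simp only [sub_zero, ← mul_sub] at h
  refine h.congr_of_eventuallyEq (Eventually.of_forall fun y => ?_)
  exact log_div (cosh_pos _).ne' (cosh_pos _).ne'

theorem ptil_eq (c x : ℝ) :
    ptil c x = -c * kappa c * (tanh (kappa c * (x - 1)) - tanh (kappa c * x)) := by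
  rw [ptil, (hasDerivAt_qt c x).deriv, mul_assoc]

theorem ptil_eq_div (c x : ℝ) :
    ptil c x = c * kappa c * sinh (kappa c) / (cosh (kappa c * (x - 1)) * cosh (kappa c * x)) := by
  rw [ptil_eq, tanh_sub_tanh, show kappa c * (x - 1) - kappa c * x = -kappa c by ring, sinh_neg]
  ring

theorem hasDerivAt_ptil (c x : ℝ) :
    HasDerivAt (ptil c)
      (-c * kappa c ^ 2 * (1 / cosh (kappa c * (x - 1)) ^ 2 - 1 / cosh (kappa c * x) ^ 2)) x := by
  have h := ((hasDerivAt_tanh_mul_sub (kappa c) 1 x).sub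
    (hasDerivAt_tanh_mul_sub (kappa c) 0 x)).const_mul (-c * kappa c)
  simp only [sub_zero] at h
  rw [funext (ptil_eq c)]
  exact h.congr_deriv (by ring)

theorem hasDerivAt_rtil (c x : ℝ) :
    HasDerivAt (rtil c) (deriv (qt c) (x + 1) - deriv (qt c) x) x := by
  have hshift := (hasDerivAt_qt c (x + 1)).comp x ((hasDerivAt_id x).add_const 1)
  rw [mul_one, ← (hasDerivAt_qt c (x + 1)).deriv] at hshift
  exact hshift.sub (hasDerivAt_qt c x).differentiableAt.hasDerivAt

theorem neg_mul_deriv_rtil (c x : ℝ) : -c * deriv (rtil c) x = ptil c (x + 1) - ptil c x := by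
  rw [(hasDerivAt_rtil c x).deriv, ptil, ptil]
  ring

theorem cosh_sub_mul_cosh_add (a b : ℝ) :
    cosh (a - b) * cosh (a + b) = cosh a ^ 2 + sinh b ^ 2 := by
  rw [cosh_add, cosh_sub]
  nlinarith [cosh_sq a, cosh_sq b]

theorem exp_neg_rtil (c x : ℝ) :
    exp (-rtil c x) = 1 + sinh (kappa c) ^ 2 / cosh (kappa c * x) ^ 2 := by
  have hexp : ∀ y, exp (qt c y) = cosh (kappa c * (y - 1)) / cosh (kappa c * y) := fun y =>
    exp_log (div_pos (cosh_pos _) (cosh_pos _))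
  have hprod : cosh (kappa c * (x - 1)) * cosh (kappa c * (x + 1)) =
      cosh (kappa c * x) ^ 2 + sinh (kappa c) ^ 2 := by
    rw [mul_sub, mul_add, mul_one]
    exact cosh_sub_mul_cosh_add _ _
  rw [rtil, neg_sub, exp_sub, hexp, hexp, add_sub_cancel_right]
  field_simp [(cosh_pos (kappa c * x)).ne', (cosh_pos (kappa c * (x + 1))).ne']
  linear_combination hprod

theorem V'_rtil (c x : ℝ) : V' (rtil c x) = -(sinh (kappa c) ^ 2 / cosh (kappa c * x) ^ 2) := by
  rw [V', exp_neg_rtil]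
  ring

theorem neg_mul_deriv_ptil {c : ℝ} (hκ : sinh (kappa c) = c * kappa c) (x : ℝ) :
    -c * deriv (ptil c) x = V' (rtil c x) - V' (rtil c (x - 1)) := by
  rw [(hasDerivAt_ptil c x).deriv, V'_rtil, V'_rtil, hκ]
  ring

theorem inv_cosh_le_two_mul_exp_neg_abs (y : ℝ) : (cosh y)⁻¹ ≤ 2 * exp (-|y|) := by
  have h : exp |y| / 2 ≤ cosh y := by
    rw [cosh_eq]
    linarith [exp_abs_le y]
  calc (cosh y)⁻¹ ≤ (exp |y| / 2)⁻¹ := inv_anti₀ (by positivity) h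
    _ = 2 * exp (-|y|) := by rw [inv_div, exp_neg, div_eq_mul_inv]

theorem summable_exp_neg_mul_abs_int {k : ℝ} (hk : 0 < k) :
    Summable fun n : ℤ => exp (-(k * |(n : ℝ)|)) := by
  have h := summable_exp_nat_mul_iff.2 (neg_lt_zero.2 hk)
  refine Summable.of_nat_of_neg ?_ ?_ <;> simpa [mul_comm] using h

theorem summable_inv_cosh_mul_int_sub {k : ℝ} (hk : k ≠ 0) (a : ℝ) :
    Summable fun n : ℤ => (cosh (k * (n - a)))⁻¹ := by
  refine Summable.of_nonneg_of_le (fun n => (inv_pos.2 (cosh_pos _)).le) (fun n => ?_)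
    ((summable_exp_neg_mul_abs_int (abs_pos.2 hk)).mul_left (2 * exp (|k| * |a|)))
  have htri : |(n : ℝ)| - |a| ≤ |(n : ℝ) - a| := abs_sub_abs_le_abs_sub _ _
  calc (cosh (k * (n - a)))⁻¹ ≤ 2 * exp (-|k * (n - a)|) := inv_cosh_le_two_mul_exp_neg_abs _
    _ ≤ 2 * exp (|k| * |a| + -(|k| * |(n : ℝ)|)) := by
        gcongr
        rw [abs_mul]
        nlinarith [abs_nonneg k]
    _ = 2 * exp (|k| * |a|) * exp (-(|k| * |(n : ℝ)|)) := by rw [exp_add, mul_assoc]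

theorem abs_rtil_le (c x : ℝ) : |rtil c x| ≤ sinh (kappa c) ^ 2 * (cosh (kappa c * x))⁻¹ := by
  set y := sinh (kappa c) ^ 2 / cosh (kappa c * x) ^ 2 with hy
  have hy0 : 0 ≤ y := by positivity
  have hr : -rtil c x = log (1 + y) := by rw [← exp_neg_rtil, log_exp]
  have hinv : (cosh (kappa c * x))⁻¹ ≤ 1 := inv_le_one_of_one_le₀ (one_le_cosh _)
  calc |rtil c x| = log (1 + y) := by
        rw [← hr, abs_of_nonpos (by linarith [log_nonneg (by linarith : (1 : ℝ) ≤ 1 + y)])]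
    _ ≤ y := by linarith [log_le_sub_one_of_pos (by linarith : (0 : ℝ) < 1 + y)]
    _ = sinh (kappa c) ^ 2 * (cosh (kappa c * x))⁻¹ * (cosh (kappa c * x))⁻¹ := by
        rw [hy]; ring
    _ ≤ sinh (kappa c) ^ 2 * (cosh (kappa c * x))⁻¹ :=
        mul_le_of_le_one_right (by positivity) hinv

theorem abs_ptil_le (c x : ℝ) :
    |ptil c x| ≤ |c * kappa c * sinh (kappa c)| * (cosh (kappa c * x))⁻¹ := by
  rw [ptil_eq_div, abs_div, abs_of_pos (mul_pos (cosh_pos _) (cosh_pos _)), ← div_eq_mul_inv]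
  exact div_le_div_of_nonneg_left (abs_nonneg _) (cosh_pos _)
    (le_mul_of_one_le_left (cosh_pos _).le (one_le_cosh _))

theorem nsq_solProfile_le (c x : ℝ) :
    nsq (solProfile c x) ≤
      (sinh (kappa c) ^ 4 + (c * kappa c * sinh (kappa c)) ^ 2) * (cosh (kappa c * x))⁻¹ := by
  set C := (cosh (kappa c * x))⁻¹
  have hC0 : 0 ≤ C := (inv_pos.2 (cosh_pos _)).le
  have hC1 : C ≤ 1 := inv_le_one_of_one_le₀ (one_le_cosh _)
  have hr := sq_le_sq' (neg_le_of_abs_le (abs_rtil_le c x)) (le_of_abs_le (abs_rtil_le c x))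
  have hp := sq_le_sq' (neg_le_of_abs_le (abs_ptil_le c x)) (le_of_abs_le (abs_ptil_le c x))
  rw [mul_pow, sq_abs] at hp
  calc nsq (solProfile c x)
        ≤ (sinh (kappa c) ^ 4 + (c * kappa c * sinh (kappa c)) ^ 2) * C ^ 2 := by
        rw [nsq, solProfile]
        nlinarith
    _ ≤ _ := by
        gcongr
        nlinarith

theorem summable_nsq_solProfile {c : ℝ} (hκ : kappa c ≠ 0) (a : ℝ) :
    Summable fun n : ℤ => nsq (solProfile c (n - a)) :=
  Summable.of_nonneg_of_le (fun n => by rw [nsq]; positivity) (fun n => nsq_solProfile_le c _)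
    ((summable_inv_cosh_mul_int_sub hκ a).mul_left _)

theorem hasDerivAt_comp_sub_mul_sub {f : ℝ → ℝ} {f' y c x₀ t : ℝ}
    (hf : HasDerivAt f f' (y - c * t - x₀)) :
    HasDerivAt (fun s => f (y - c * s - x₀)) (-c * f') t :=
  (hf.comp t ((((hasDerivAt_id t).const_mul c).const_sub y).sub_const x₀)).congr_deriv (by ring)

theorem isTodaSolution_of_profile {c : ℝ} {R P : ℝ → ℝ} (hR : Differentiable ℝ R)
    (hP : Differentiable ℝ P) (hRP : ∀ x, -c * deriv R x = P (x + 1) - P x)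
    (hPR : ∀ x, -c * deriv P x = V' (R x) - V' (R (x - 1)))
    (hmem : ∀ a, Summable fun n : ℤ => nsq (R (n - a), P (n - a))) (x₀ : ℝ) :
    IsTodaSolution fun t n => (R (n - c * t - x₀), P (n - c * t - x₀)) := by
  refine ⟨fun t => by simpa only [Meml2, sub_sub] using hmem (c * t + x₀),
    fun t n => ?_, fun t n => ?_⟩
  · refine (hasDerivAt_comp_sub_mul_sub (hR _).hasDerivAt).congr_deriv ?_
    rw [hRP, show ((n + 1 : ℤ) : ℝ) - c * t - x₀ = n - c * t - x₀ + 1 by push_cast; ring]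
  · refine (hasDerivAt_comp_sub_mul_sub (hP _).hasDerivAt).congr_deriv ?_
    rw [hPR, show ((n - 1 : ℤ) : ℝ) - c * t - x₀ = n - c * t - x₀ - 1 by push_cast; ring]

/-- The Toda soliton profile yields an exact traveling-wave solution. -/
theorem toda_profile_traveling_wave (c : ℝ) (hc : 1 < c) :
    (∀ x : ℝ, -c * deriv (rtil c) x = ptil c (x + 1) - ptil c x ∧
      -c * deriv (ptil c) x = V' (rtil c x) - V' (rtil c (x - 1))) ∧
    ∀ x₀ : ℝ, IsTodaSolution (fun t n => solProfile c ((n : ℝ) - c * t - x₀)) := by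
  obtain ⟨hκ_pos, hκ⟩ := kappa_spec hc
  have hRP := neg_mul_deriv_rtil c
  have hPR := neg_mul_deriv_ptil hκ
  refine ⟨fun x => ⟨hRP x, hPR x⟩, isTodaSolution_of_profile ?_ ?_ hRP hPR
    (summable_nsq_solProfile hκ_pos.ne')⟩
  · exact fun x => (hasDerivAt_rtil c x).differentiableAt
  · exact fun x => (hasDerivAt_ptil c x).differentiableAt

end

end TodaPaper
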